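/- Let N ≥ 2 and let u ∈ P_{N+1} and u_N ∈ P_N be real polynomials such that u_N(-1) = u(-1) and u_N'(x_k) = u'(x_k) at all N roots x_k of the Legendre polynomial L_N. Then there exists a constant c such that u(x) - u_N(x) = c·(L_{N+1}(x) - L_{N-1}(x))/(2N+1) = c·(x²-1)·L_N'(x)/(N(N+1)) for all x. -/

import Mathlib

/-!
The error `e = u - u_N` has `e'` of degree at most `N` vanishing at the roots of `L_N`; these are
`N` distinct real numbers, so `e' = c L_N`. Integrating with `L_{N+1}' - L_{N-1}' = (2N+1) L_N` and
`e(-1) = 0 = L_{N+1}(-1) - L_{N-1}(-1)` gives the first formula, and the identity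
`(2N+1)(x² - 1) L_N' = N(N+1)(L_{N+1} - L_{N-1})` turns it into the second.

That `L_N` has `N` simple real roots comes from the Legendre equation
`(x² - 1) y'' + 2 x y' = N(N+1) y`. Its polynomial solutions form a line, and both `L_N` and the
Rodrigues polynomial `D^N (x² - 1)^N` lie on it, so they are proportional. Rolle's theorem, counted with
multiplicity, passes the `2N` real roots of `(x² - 1)^N` down to `N` real roots of its `N`-th
derivative. A double root of a nonzero solution is impossible: the differentiated equations would
make every derivative vanish there.
-/

open Polynomial

noncomputable def legendre : ℕ → Polynomial ℝ
  | 0 => 1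
  | 1 => Polynomial.X
  | (n + 2) =>
      Polynomial.C ((2 * (n : ℝ) + 3) / ((n : ℝ) + 2)) * Polynomial.X * legendre (n + 1)
        - Polynomial.C (((n : ℝ) + 1) / ((n : ℝ) + 2)) * legendre n

namespace Polynomial

lemma coeff_X_mul_derivative {R : Type*} [CommSemiring R] (p : R[X]) (k : ℕ) :
    (X * derivative p).coeff k = k * p.coeff k := by
  cases k with
  | zero => simp
  | succ k => rw [coeff_X_mul, coeff_derivative, mul_comm]; push_cast; ring

lemma card_roots_le_card_roots_iterate_derivative_add (p : ℝ[X]) (k : ℕ) :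
    Multiset.card p.roots ≤ Multiset.card (derivative^[k] p).roots + k := by
  induction k with
  | zero => simp
  | succ k ih =>
    rw [Function.iterate_succ_apply']
    linarith [card_roots_le_derivative (derivative^[k] p)]

lemma exists_eq_C_mul_of_isRoot_imp {K : Type*} [Field K] {p q : K[X]} (hp : p ≠ 0)
    (hcard : Multiset.card p.roots = p.natDegree) (hnodup : p.roots.Nodup)
    (hdeg : q.natDegree ≤ p.natDegree) (h : ∀ x, p.IsRoot x → q.IsRoot x) :
    ∃ c, q = C c * p := by
  rcases eq_or_ne q 0 with rfl | hq
  · exact ⟨0, by simp⟩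
  set P := (p.roots.map fun a => X - C a).prod
  have hPq : P ∣ q := (Multiset.prod_X_sub_C_dvd_iff_le_roots hq _).2 <|
    (Multiset.le_iff_subset hnodup).2 fun x hx => (mem_roots hq).2 (h x ((mem_roots hp).1 hx))
  have hPdeg : P.natDegree = p.natDegree := by
    rw [natDegree_multiset_prod_X_sub_C_eq_card, hcard]
  refine ⟨q.leadingCoeff / p.leadingCoeff, ?_⟩
  calc q = C q.leadingCoeff * P :=
        eq_leadingCoeff_mul_of_monic_of_dvd_of_natDegree_le (monic_multisetProd_X_sub_C _) hPq
          (hdeg.trans hPdeg.ge)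
    _ = C (q.leadingCoeff / p.leadingCoeff) * (C p.leadingCoeff * P) := by
        rw [← mul_assoc, ← C_mul, div_mul_cancel₀ _ (leadingCoeff_ne_zero.2 hp)]
    _ = C (q.leadingCoeff / p.leadingCoeff) * p := by
        rw [C_leadingCoeff_mul_prod_multiset_X_sub_C hcard]

end Polynomial

def IsGegenbauerSol (a b : ℝ) (y : ℝ[X]) : Prop :=
  (X ^ 2 - 1) * derivative (derivative y) + C a * X * derivative y + C b * y = 0

section Gegenbauer

variable {a b : ℝ} {y : ℝ[X]}

lemma IsGegenbauerSol.sub {p q : ℝ[X]} (hp : IsGegenbauerSol a b p)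
    (hq : IsGegenbauerSol a b q) : IsGegenbauerSol a b (p - q) := by
  unfold IsGegenbauerSol at *
  simp only [derivative_sub]
  linear_combination hp - hq

lemma IsGegenbauerSol.C_mul {c : ℝ} (h : IsGegenbauerSol a b y) :
    IsGegenbauerSol a b (C c * y) := by
  unfold IsGegenbauerSol at *
  simp only [derivative_C_mul]
  linear_combination C c * h

lemma IsGegenbauerSol.deriv (h : IsGegenbauerSol a b y) :
    IsGegenbauerSol (a + 2) (a + b) (derivative y) := by
  have h' := congrArg Polynomial.derivative h
  simp only [derivative_add, derivative_mul, derivative_sub, derivative_X_pow, derivative_one,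
    derivative_C, derivative_X, derivative_zero] at h'
  unfold IsGegenbauerSol
  simp only [map_add, map_ofNat, Nat.cast_ofNat] at h' ⊢
  linear_combination h'

lemma IsGegenbauerSol.iterate_deriv (h : IsGegenbauerSol a b y) (k : ℕ) :
    IsGegenbauerSol (a + 2 * k) (b + k * a + k * (k - 1)) (derivative^[k] y) := by
  induction k with
  | zero => simpa using h
  | succ k ih =>
    rw [Function.iterate_succ_apply']
    convert ih.deriv using 1 <;> push_cast <;> ring

lemma IsGegenbauerSol.eval (h : IsGegenbauerSol a b y) (r : ℝ) :
    (r ^ 2 - 1) * (derivative (derivative y)).eval r + a * r * (derivative y).eval r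
      + b * y.eval r = 0 := by
  simpa using congrArg (Polynomial.eval r) h

lemma IsGegenbauerSol.coeff (h : IsGegenbauerSol a b y) (k : ℕ) :
    (k * (k - 1) + a * k + b) * y.coeff k = (k + 1) * (k + 2) * y.coeff (k + 2) := by
  have e : (X ^ 2 - 1) * derivative (derivative y) + C a * X * derivative y + C b * y =
      X * derivative (X * derivative y) - X * derivative y - derivative (derivative y)
        + C a * (X * derivative y) + C b * y := by
    rw [derivative_mul, derivative_X]; ring
  unfold IsGegenbauerSol at h
  rw [e] at h
  have hk := congrArg (Polynomial.coeff · k) h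
  simp only [coeff_add, coeff_sub, coeff_C_mul, coeff_X_mul_derivative, coeff_derivative,
    coeff_zero] at hk
  push_cast at hk
  linear_combination hk

lemma IsGegenbauerSol.indicial_natDegree (h : IsGegenbauerSol a b y) (hy : y ≠ 0) :
    (y.natDegree : ℝ) * (y.natDegree - 1) + a * y.natDegree + b = 0 := by
  have hk := h.coeff y.natDegree
  rw [coeff_eq_zero_of_natDegree_lt (n := y.natDegree + 2) (by omega), mul_zero] at hk
  exact (mul_eq_zero.1 hk).resolve_right (leadingCoeff_ne_zero.2 hy)

lemma IsGegenbauerSol.not_isRoot_derivative (ha : 0 ≤ a) (h : IsGegenbauerSol a b y)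
    (hy : y ≠ 0) {r : ℝ} (hr : y.IsRoot r) : ¬ (derivative y).IsRoot r := by
  intro hr'
  have hD : ∀ k, (derivative^[k] y).IsRoot r ∧ (derivative^[k + 1] y).IsRoot r := by
    intro k
    induction k with
    | zero => exact ⟨hr, hr'⟩
    | succ k ih =>
      refine ⟨ih.2, ?_⟩
      have hk := (h.iterate_deriv k).eval r
      have hk₁ := (h.iterate_deriv (k + 1)).eval r
      simp only [← Function.iterate_succ_apply' derivative] at hk hk₁
      rw [ih.1.eq_zero, ih.2.eq_zero] at hk
      rw [ih.2.eq_zero] at hk₁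
      show (derivative^[k + 2] y).eval r = 0
      -- at `r = ±1` the leading term of the `k`-th equation drops out; use the next one instead
      by_cases hr1 : r ^ 2 = 1
      · have hr0 : r ≠ 0 := by rintro rfl; norm_num at hr1
        have hpos : a + 2 * ((k : ℝ) + 1) ≠ 0 := by positivity
        simpa [hr1, hr0, hpos] using hk₁
      · simpa [sub_eq_zero, hr1] using hk
  have hmult := (lt_rootMultiplicity_iff_isRoot_iterate_derivative hy (n := y.natDegree)).2
    fun m _ => (hD m).1
  classical
  rw [← count_roots] at hmult
  exact (hmult.trans_le ((Multiset.count_le_card _ _).trans (card_roots' y))).false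

lemma IsGegenbauerSol.nodup_roots (ha : 0 ≤ a) (h : IsGegenbauerSol a b y) (hy : y ≠ 0) :
    y.roots.Nodup := by
  classical
  refine Multiset.nodup_iff_count_le_one.2 fun r => ?_
  rw [count_roots]
  by_contra hr
  obtain ⟨hr₀, hr₁⟩ := (one_lt_rootMultiplicity_iff_isRoot hy).1 (not_le.1 hr)
  exact h.not_isRoot_derivative ha hy hr₀ hr₁

end Gegenbauer

section LegendreEquation

variable {n : ℕ}

lemma IsGegenbauerSol.natDegree_eq {y : ℝ[X]} (h : IsGegenbauerSol 2 (-(n * (n + 1))) y)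
    (hy : y ≠ 0) : y.natDegree = n := by
  have hd := h.indicial_natDegree hy
  set d : ℕ := y.natDegree
  rcases lt_trichotomy d n with hlt | heq | hgt
  · have : (d : ℝ) + 1 ≤ n := by exact_mod_cast hlt
    nlinarith
  · exact heq
  · have : (n : ℝ) + 1 ≤ d := by exact_mod_cast hgt
    nlinarith

lemma IsGegenbauerSol.exists_eq_C_mul {p q : ℝ[X]} (hp : IsGegenbauerSol 2 (-(n * (n + 1))) p)
    (hq : IsGegenbauerSol 2 (-(n * (n + 1))) q) (hq₀ : q ≠ 0) : ∃ c, p = C c * q := by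
  have hqn : q.coeff n ≠ 0 := by
    rw [← hq.natDegree_eq hq₀]; exact leadingCoeff_ne_zero.2 hq₀
  refine ⟨p.coeff n / q.coeff n, sub_eq_zero.1 (by_contra fun hr => ?_)⟩
  have hdeg := (hp.sub hq.C_mul).natDegree_eq hr
  apply leadingCoeff_ne_zero.2 hr
  rw [leadingCoeff, hdeg, coeff_sub, coeff_C_mul, div_mul_cancel₀ _ hqn, sub_self]

end LegendreEquation

section Rodrigues

lemma X_sq_sub_one_mul_derivative_X_sq_sub_one_pow (n : ℕ) :
    (X ^ 2 - 1 : ℝ[X]) * derivative ((X ^ 2 - 1) ^ n) = 2 * (n : ℝ[X]) * X * (X ^ 2 - 1) ^ n := by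
  induction n with
  | zero => simp
  | succ n ih =>
    rw [pow_succ (X ^ 2 - 1 : ℝ[X]) n, derivative_mul]
    simp only [derivative_sub, derivative_X_sq, derivative_one, map_ofNat]
    push_cast
    linear_combination (X ^ 2 - 1) * ih

lemma isGegenbauerSol_X_sq_sub_one_pow (n : ℕ) :
    IsGegenbauerSol (2 - 2 * n) (-(2 * n)) ((X ^ 2 - 1) ^ n) := by
  have h := congrArg derivative (X_sq_sub_one_mul_derivative_X_sq_sub_one_pow n)
  simp only [derivative_mul, derivative_sub, derivative_X_sq, derivative_one,
    derivative_natCast, derivative_ofNat, derivative_X, map_ofNat] at h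
  unfold IsGegenbauerSol
  simp only [map_neg, map_mul, map_sub, map_natCast, map_ofNat]
  linear_combination h

lemma isGegenbauerSol_rodrigues (n : ℕ) :
    IsGegenbauerSol 2 (-(n * (n + 1))) (derivative^[n] ((X ^ 2 - 1) ^ n)) := by
  convert (isGegenbauerSol_X_sq_sub_one_pow n).iterate_deriv n using 1 <;> ring

lemma card_roots_X_sq_sub_one_pow (n : ℕ) :
    Multiset.card ((X ^ 2 - 1 : ℝ[X]) ^ n).roots = 2 * n := by
  have h : (X ^ 2 - 1 : ℝ[X]) = (X - C 1) * (X - C (-1)) := by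
    simp only [map_neg, map_one]; ring
  rw [roots_pow, h, roots_mul (mul_ne_zero (X_sub_C_ne_zero 1) (X_sub_C_ne_zero (-1))),
    roots_X_sub_C, roots_X_sub_C]
  simp [mul_comm]

end Rodrigues

section Legendre

lemma legendre_add_two_mul (n : ℕ) :
    ((n : ℝ[X]) + 2) * legendre (n + 2) =
      (2 * (n : ℝ[X]) + 3) * X * legendre (n + 1) - ((n : ℝ[X]) + 1) * legendre n := by
  have hn : (n : ℝ) + 2 ≠ 0 := by positivity
  have hC : ∀ c : ℝ, ((n : ℝ[X]) + 2) * C (c / ((n : ℝ) + 2)) = C c := fun c => by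
    rw [← map_natCast C, ← map_ofNat C 2, ← map_add, ← C_mul, mul_div_cancel₀ _ hn]
  rw [legendre, mul_sub, ← mul_assoc, ← mul_assoc, ← mul_assoc, hC, hC]
  simp only [map_add, map_mul, map_natCast, map_ofNat, map_one]

lemma legendre_eval_neg_one (n : ℕ) : (legendre n).eval (-1) = (-1) ^ n := by
  induction n using Nat.twoStepInduction with
  | zero => simp [legendre]
  | one => simp [legendre]
  | more n ih₀ ih₁ =>
    have h := congrArg (eval (-1)) (legendre_add_two_mul n)
    simp only [eval_mul, eval_add, eval_sub, eval_natCast, eval_ofNat, eval_X, eval_one, ih₀,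
      ih₁] at h
    have hn : (n : ℝ) + 2 ≠ 0 := by positivity
    apply mul_left_cancel₀ hn
    linear_combination h

lemma legendre_ne_zero (n : ℕ) : legendre n ≠ 0 := fun h => by
  have h₁ := legendre_eval_neg_one n
  rw [h, eval_zero] at h₁
  exact pow_ne_zero n (by norm_num) h₁.symm

private lemma derivative_legendre_succ_and_X_mul (n : ℕ) :
    derivative (legendre (n + 1)) = X * derivative (legendre n) + ((n : ℝ[X]) + 1) * legendre n ∧
    X * derivative (legendre (n + 1)) - derivative (legendre n) =
      ((n : ℝ[X]) + 1) * legendre (n + 1) := by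
  induction n with
  | zero => simp [legendre]
  | succ n ih =>
    obtain ⟨hA, hB⟩ := ih
    have hrec := legendre_add_two_mul n
    have hdrec := congrArg derivative hrec
    simp only [derivative_mul, derivative_add, derivative_sub, derivative_natCast,
      derivative_ofNat, derivative_X, derivative_one] at hdrec
    have hn : ((n : ℝ[X]) + 2) ≠ 0 := by
      rw [← map_natCast C, ← map_ofNat C 2, ← map_add, Ne, C_eq_zero]; positivity
    have hA' : derivative (legendre (n + 2)) =
        X * derivative (legendre (n + 1)) + ((n : ℝ[X]) + 2) * legendre (n + 1) := by
      apply mul_left_cancel₀ hn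
      linear_combination hdrec + ((n : ℝ[X]) + 1) * hB
    push_cast
    refine ⟨by linear_combination hA', ?_⟩
    linear_combination X * hA' + X * hB - hA - hrec

lemma derivative_legendre_succ (n : ℕ) :
    derivative (legendre (n + 1)) = X * derivative (legendre n) + ((n : ℝ[X]) + 1) * legendre n :=
  (derivative_legendre_succ_and_X_mul n).1

lemma X_mul_derivative_legendre_succ_sub (n : ℕ) :
    X * derivative (legendre (n + 1)) - derivative (legendre n) =
      ((n : ℝ[X]) + 1) * legendre (n + 1) :=
  (derivative_legendre_succ_and_X_mul n).2

lemma X_sq_sub_one_mul_derivative_legendre_succ (n : ℕ) :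
    (X ^ 2 - 1) * derivative (legendre (n + 1)) =
      ((n : ℝ[X]) + 1) * (X * legendre (n + 1) - legendre n) := by
  linear_combination X * X_mul_derivative_legendre_succ_sub n - derivative_legendre_succ n

lemma derivative_legendre_add_two_sub (n : ℕ) :
    derivative (legendre (n + 2)) - derivative (legendre n) =
      (2 * (n : ℝ[X]) + 3) * legendre (n + 1) := by
  have h := derivative_legendre_succ (n + 1)
  push_cast at h
  linear_combination h + X_mul_derivative_legendre_succ_sub n

lemma mul_X_sq_sub_one_mul_derivative_legendre_succ (n : ℕ) :
    (2 * (n : ℝ[X]) + 3) * ((X ^ 2 - 1) * derivative (legendre (n + 1))) =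
      ((n : ℝ[X]) + 1) * ((n : ℝ[X]) + 2) * (legendre (n + 2) - legendre n) := by
  linear_combination (2 * (n : ℝ[X]) + 3) * X_sq_sub_one_mul_derivative_legendre_succ n
    - ((n : ℝ[X]) + 1) * legendre_add_two_mul n

lemma isGegenbauerSol_legendre (n : ℕ) : IsGegenbauerSol 2 (-(n * (n + 1))) (legendre n) := by
  unfold IsGegenbauerSol
  cases n with
  | zero => simp [legendre]
  | succ n =>
    have h := congrArg derivative (X_sq_sub_one_mul_derivative_legendre_succ n)
    simp only [derivative_mul, derivative_sub, derivative_X_sq, derivative_one, derivative_add,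
      derivative_natCast, derivative_X, map_ofNat] at h
    simp only [map_neg, map_mul, map_add, map_natCast, map_one, map_ofNat]
    push_cast
    linear_combination h + ((n : ℝ[X]) + 1) * X_mul_derivative_legendre_succ_sub n

lemma natDegree_legendre (n : ℕ) : (legendre n).natDegree = n :=
  (isGegenbauerSol_legendre n).natDegree_eq (legendre_ne_zero n)

lemma nodup_roots_legendre (n : ℕ) : (legendre n).roots.Nodup :=
  (isGegenbauerSol_legendre n).nodup_roots zero_le_two (legendre_ne_zero n)

lemma card_roots_legendre (n : ℕ) : Multiset.card (legendre n).roots = n := by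
  refine le_antisymm ((card_roots' _).trans (natDegree_legendre n).le) ?_
  obtain ⟨c, hc⟩ := (isGegenbauerSol_rodrigues n).exists_eq_C_mul (isGegenbauerSol_legendre n)
    (legendre_ne_zero n)
  have hR := card_roots_le_card_roots_iterate_derivative_add ((X ^ 2 - 1 : ℝ[X]) ^ n) n
  rw [card_roots_X_sq_sub_one_pow, hc] at hR
  rcases eq_or_ne c 0 with rfl | hc₀
  · simp at hR; omega
  · rw [roots_C_mul _ hc₀] at hR; omega

lemma eq_of_derivative_eq_C_mul_legendre {e : ℝ[X]} {n : ℕ} {c : ℝ}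
    (hd : derivative e = C c * legendre (n + 1)) (he : e.eval (-1) = 0) :
    e = C (c / (2 * n + 3)) * (legendre (n + 2) - legendre n) := by
  set G := C (c / (2 * n + 3)) * (legendre (n + 2) - legendre n)
  have hn : (2 * n + 3 : ℝ) ≠ 0 := by positivity
  have hG : derivative G = derivative e := by
    rw [derivative_C_mul, derivative_sub, derivative_legendre_add_two_sub, hd, ← mul_assoc,
      show (2 * (n : ℝ[X]) + 3) = C (2 * (n : ℝ) + 3) by simp [map_ofNat], ← C_mul,
      div_mul_cancel₀ _ hn]
  have hG₁ : G.eval (-1) = 0 := by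
    simp [G, legendre_eval_neg_one, pow_succ]
  have hconst := eq_C_of_derivative_eq_zero (p := e - G) (by rw [derivative_sub, hG, sub_self])
  have h₀ := congrArg (eval (-1)) hconst
  rw [eval_sub, he, hG₁, sub_zero, eval_C] at h₀
  rw [← sub_eq_zero, hconst, ← h₀, map_zero]

end Legendre

theorem stmt_17 (N : ℕ) (hN : 2 ≤ N) (u uN : Polynomial ℝ)
    (hu : u.natDegree ≤ N + 1) (huN : uN.natDegree ≤ N)
    (hinit : uN.eval (-1) = u.eval (-1))
    (hcol : ∀ x : ℝ, (legendre N).eval x = 0 →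
      (derivative uN).eval x = (derivative u).eval x) :
    ∃ c : ℝ, ∀ x : ℝ,
      u.eval x - uN.eval x =
          c * ((legendre (N + 1)).eval x - (legendre (N - 1)).eval x) / (2 * (N : ℝ) + 1) ∧
      u.eval x - uN.eval x =
          c * (x ^ 2 - 1) * (derivative (legendre N)).eval x / ((N : ℝ) * ((N : ℝ) + 1)) := by
  obtain ⟨n, rfl⟩ : ∃ n, N = n + 1 := ⟨N - 1, by omega⟩
  have hdeg : (derivative (u - uN)).natDegree ≤ (legendre (n + 1)).natDegree := by
    rw [natDegree_legendre]
    have := natDegree_sub_le u uN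
    have := natDegree_derivative_le (u - uN)
    omega
  obtain ⟨c, hc⟩ := exists_eq_C_mul_of_isRoot_imp (legendre_ne_zero _)
    ((card_roots_legendre _).trans (natDegree_legendre _).symm) (nodup_roots_legendre _) hdeg
    fun x hx => by simp [hcol x hx]
  have he := eq_of_derivative_eq_C_mul_legendre hc (by simp [hinit])
  have hn₁ : (n : ℝ) + 1 ≠ 0 := by positivity
  have hn₃ : 2 * (n : ℝ) + 3 ≠ 0 := by positivity
  refine ⟨c, fun x => ?_⟩
  have hx := congrArg (eval x) (mul_X_sq_sub_one_mul_derivative_legendre_succ n)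
  rw [← eval_sub, he]
  simp only [eval_mul, eval_sub, eval_add, eval_pow, eval_X, eval_one, eval_natCast, eval_ofNat,
    eval_C, add_tsub_cancel_right] at hx ⊢
  push_cast
  constructor
  · field_simp; ring
  · field_simp
    linear_combination -c * hx
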